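/- arXiv:1304.0827 — 4 statements merged into one kernel-verified Lean document; each statement's English description precedes it below -/
import Mathlib

section
/- If f : (0, ∞) → (0, ∞) is logarithmically completely monotonic, i.e. f is C^∞ and (-1)^k (log f)^{(k)}(x) ≥ 0 for all k ≥ 0 and x > 0, then f is completely monotonic, i.e. (-1)^k f^{(k)}(x) ≥ 0 for all k ≥ 0 and x > 0. -/
open Real Set

private lemma iDW_of_isOpen {f : ℝ → ℝ} {s : Set ℝ} (hs : IsOpen s) (n : ℕ) {x : ℝ}
    (hx : x ∈ s) : iteratedDerivWithin n f s x = iteratedDeriv n f x := by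
  rw [iteratedDerivWithin_eq_iteratedFDerivWithin, iteratedDeriv_eq_iteratedFDeriv,
    iteratedFDerivWithin_of_isOpen n hs hx]

/-- Sign lemma: the product of two functions whose derivatives alternate in sign up to
order `n` has `n`-th derivative of sign `(-1)^n`. -/
private lemma signMulAux :
    ∀ (n : ℕ) (u v : ℝ → ℝ), ContDiffOn ℝ (⊤ : ℕ∞) u (Ioi 0) → ContDiffOn ℝ (⊤ : ℕ∞) v (Ioi 0) →
    (∀ k ≤ n, ∀ x ∈ Ioi (0:ℝ), 0 ≤ (-1 : ℝ) ^ k * iteratedDerivWithin k u (Ioi 0) x) →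
    (∀ k ≤ n, ∀ x ∈ Ioi (0:ℝ), 0 ≤ (-1 : ℝ) ^ k * iteratedDerivWithin k v (Ioi 0) x) →
    ∀ x ∈ Ioi (0:ℝ), 0 ≤ (-1 : ℝ) ^ n * iteratedDerivWithin n (fun t => u t * v t) (Ioi 0) x := by
  have hU : UniqueDiffOn ℝ (Ioi (0:ℝ)) := (isOpen_Ioi).uniqueDiffOn
  intro n
  induction n with
  | zero =>
    intro u v _ _ hu hv x hx
    simpa using mul_nonneg (by simpa using hu 0 le_rfl x hx) (by simpa using hv 0 le_rfl x hx)
  | succ n IH =>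
    intro u v hcu hcv hu hv x hx
    have hcu' : ContDiffOn ℝ (⊤ : ℕ∞) (derivWithin u (Ioi 0)) (Ioi 0) := hcu.derivWithin hU (by simp)
    have hcv' : ContDiffOn ℝ (⊤ : ℕ∞) (derivWithin v (Ioi 0)) (Ioi 0) := hcv.derivWithin hU (by simp)
    set A : ℝ → ℝ := fun t => (-derivWithin u (Ioi 0) t) * v t with hA
    set B : ℝ → ℝ := fun t => u t * (-derivWithin v (Ioi 0) t) with hB
    have hcA : ContDiffOn ℝ (⊤ : ℕ∞) A (Ioi 0) := (hcu'.neg).mul hcv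
    have hcB : ContDiffOn ℝ (⊤ : ℕ∞) B (Ioi 0) := hcu.mul (hcv'.neg)
    have heq : Set.EqOn (derivWithin (fun t => u t * v t) (Ioi 0))
        (fun t => -(A t + B t)) (Ioi 0) := by
      intro y hy
      have hud : DifferentiableWithinAt ℝ u (Ioi 0) y := (hcu.differentiableOn (by simp)) y hy
      have hvd : DifferentiableWithinAt ℝ v (Ioi 0) y := (hcv.differentiableOn (by simp)) y hy
      have h := derivWithin_fun_mul hud hvd
      simp only [h, hA, hB]
      ring
    have hstep : iteratedDerivWithin (n+1) (fun t => u t * v t) (Ioi 0) x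
        = -(iteratedDerivWithin n A (Ioi 0) x + iteratedDerivWithin n B (Ioi 0) x) := by
      rw [iteratedDerivWithin_succ', iteratedDerivWithin_congr heq hx,
        iteratedDerivWithin_fun_neg, ← iteratedDerivWithin_add hx hU ((hcA.of_le (by exact_mod_cast le_top)) x hx) ((hcB.of_le (by exact_mod_cast le_top)) x hx)]
      rfl
    have hAk : ∀ k ≤ n, ∀ y ∈ Ioi (0:ℝ),
        0 ≤ (-1 : ℝ) ^ k * iteratedDerivWithin k (fun t => -derivWithin u (Ioi 0) t) (Ioi 0) y := by
      intro k hk y hy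
      rw [iteratedDerivWithin_fun_neg]
      have h1 : iteratedDerivWithin k (derivWithin u (Ioi 0)) (Ioi 0) y
          = iteratedDerivWithin (k+1) u (Ioi 0) y := (congrFun iteratedDerivWithin_succ' y).symm
      rw [h1]
      have h2 := hu (k+1) (by omega) y hy
      have hpow : (-1 : ℝ) ^ (k+1) = -(-1 : ℝ) ^ k := by ring
      rw [hpow] at h2
      linarith
    have hBk : ∀ k ≤ n, ∀ y ∈ Ioi (0:ℝ),
        0 ≤ (-1 : ℝ) ^ k * iteratedDerivWithin k (fun t => -derivWithin v (Ioi 0) t) (Ioi 0) y := by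
      intro k hk y hy
      rw [iteratedDerivWithin_fun_neg]
      have h1 : iteratedDerivWithin k (derivWithin v (Ioi 0)) (Ioi 0) y
          = iteratedDerivWithin (k+1) v (Ioi 0) y := (congrFun iteratedDerivWithin_succ' y).symm
      rw [h1]
      have h2 := hv (k+1) (by omega) y hy
      have hpow : (-1 : ℝ) ^ (k+1) = -(-1 : ℝ) ^ k := by ring
      rw [hpow] at h2
      linarith
    have ha : 0 ≤ (-1 : ℝ) ^ n * iteratedDerivWithin n A (Ioi 0) x :=
      IH (fun t => -derivWithin u (Ioi 0) t) v (hcu'.neg) hcv hAk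
        (fun k hk => hv k (by omega)) x hx
    have hb : 0 ≤ (-1 : ℝ) ^ n * iteratedDerivWithin n B (Ioi 0) x :=
      IH u (fun t => -derivWithin v (Ioi 0) t) hcu (hcv'.neg)
        (fun k hk => hu k (by omega)) hBk x hx
    rw [hstep]
    have hpow : (-1 : ℝ) ^ (n+1) = -(-1 : ℝ) ^ n := by ring
    rw [hpow]
    nlinarith [ha, hb, mul_neg ((-1:ℝ)^n) (iteratedDerivWithin n A (Ioi 0) x + iteratedDerivWithin n B (Ioi 0) x)]

/-- A logarithmically completely monotonic function on (0,∞) is completely monotonic. -/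
theorem completelyMonotonic_of_logCompletelyMonotonic (f : ℝ → ℝ)
    (hpos : ∀ x > 0, 0 < f x)
    (hsmooth : ContDiffOn ℝ (⊤ : ℕ∞) f (Ioi 0))
    (hlcm : ∀ (k : ℕ) (x : ℝ), 0 < x →
      0 ≤ (-1 : ℝ) ^ k * iteratedDeriv k (fun t => Real.log (f t)) x) :
    ∀ (k : ℕ) (x : ℝ), 0 < x → 0 ≤ (-1 : ℝ) ^ k * iteratedDeriv k f x := by
  have hU : UniqueDiffOn ℝ (Ioi (0:ℝ)) := (isOpen_Ioi).uniqueDiffOn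
  set g : ℝ → ℝ := fun t => Real.log (f t) with hg
  have hcg : ContDiffOn ℝ (⊤ : ℕ∞) g (Ioi 0) :=
    hsmooth.log (fun x hx => (hpos x hx).ne')
  have hcg' : ContDiffOn ℝ (⊤ : ℕ∞) (derivWithin g (Ioi 0)) (Ioi 0) := hcg.derivWithin hU (by simp)
  -- derivWithin f = -(w * f) on Ioi 0, where w = -g'
  set w : ℝ → ℝ := fun t => -derivWithin g (Ioi 0) t with hw
  have hcw : ContDiffOn ℝ (⊤ : ℕ∞) w (Ioi 0) := hcg'.neg
  have hderiv : Set.EqOn (derivWithin f (Ioi 0))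
      (fun t => -(w t * f t)) (Ioi 0) := by
    intro y hy
    have hfd : DifferentiableWithinAt ℝ f (Ioi 0) y := (hsmooth.differentiableOn (by simp)) y hy
    have hlog : derivWithin g (Ioi 0) y = derivWithin f (Ioi 0) y / f y := by
      have := (hfd.hasDerivWithinAt.log (hpos y hy).ne')
      exact this.derivWithin (hU.uniqueDiffWithinAt hy)
    have hfy := (hpos y hy).ne'
    simp only [hw, hlog]
    field_simp
  -- alternation of w
  have hgk : ∀ k, ∀ y ∈ Ioi (0:ℝ),
      0 ≤ (-1 : ℝ) ^ k * iteratedDerivWithin k w (Ioi 0) y := by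
    intro k y hy
    rw [hw, iteratedDerivWithin_fun_neg]
    have h1 : iteratedDerivWithin k (derivWithin g (Ioi 0)) (Ioi 0) y
        = iteratedDerivWithin (k+1) g (Ioi 0) y := (congrFun iteratedDerivWithin_succ' y).symm
    rw [h1, iDW_of_isOpen isOpen_Ioi (k+1) hy]
    have h2 := hlcm (k+1) y hy
    have hpow : (-1 : ℝ) ^ (k+1) = -(-1 : ℝ) ^ k := by ring
    rw [hpow] at h2
    linarith
  -- main statement, within version, by strong induction
  have main : ∀ n, ∀ k ≤ n, ∀ x ∈ Ioi (0:ℝ),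
      0 ≤ (-1 : ℝ) ^ k * iteratedDerivWithin k f (Ioi 0) x := by
    intro n
    induction n with
    | zero =>
      intro k hk x hx
      interval_cases k
      simpa using (hpos x hx).le
    | succ n IH =>
      intro k hk x hx
      rcases Nat.lt_or_ge k (n+1) with h | h
      · exact IH k (by omega) x hx
      · have hk' : k = n + 1 := by omega
        subst hk'
        have hstep : iteratedDerivWithin (n+1) f (Ioi 0) x
            = -(iteratedDerivWithin n (fun t => w t * f t) (Ioi 0) x) := by
          rw [iteratedDerivWithin_succ', iteratedDerivWithin_congr hderiv hx,
            iteratedDerivWithin_fun_neg]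
        rw [hstep]
        have hs := signMulAux n w f hcw hsmooth (fun k _ => hgk k)
          (fun k hk => IH k (by omega)) x hx
        have hpow : (-1 : ℝ) ^ (n+1) = -(-1 : ℝ) ^ n := by ring
        rw [hpow]
        convert hs using 1
        ring
  intro k x hx
  have := main k k le_rfl x hx
  rwa [iDW_of_isOpen isOpen_Ioi k hx] at this
end

section
/- Let a, b be integers with b ≠ 0. There exist a constant C > 0 and an integer K such that for all integers r and all integers k > K, |4k(a + b√2) + r| > C/k. -/
open Real

/-- For integers a, b with b ≠ 0, there are C > 0 and K such that
`|4k(a + b√2) + r| > C/k` for all integers r and all integers k > K. -/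
theorem badly_approximable_four_k (a b : ℤ) (hb : b ≠ 0) :
    ∃ C : ℝ, 0 < C ∧ ∃ K : ℤ, ∀ r k : ℤ, K < k →
      C / (k : ℝ) < |4 * (k : ℝ) * ((a : ℝ) + (b : ℝ) * Real.sqrt 2) + (r : ℝ)| := by
  have hbZ : (1:ℤ) ≤ |b| := Int.one_le_abs hb
  have hB : (1:ℝ) ≤ |(b:ℝ)| := by
    rw [← Int.cast_abs]; exact_mod_cast hbZ
  have hBpos : (0:ℝ) < |(b:ℝ)| := lt_of_lt_of_le one_pos hB
  have hs2 : Real.sqrt 2 ^ 2 = 2 := Real.sq_sqrt (by norm_num)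
  have hsnn : 0 ≤ Real.sqrt 2 := Real.sqrt_nonneg 2
  have hslt : Real.sqrt 2 < 1.5 := by nlinarith
  refine ⟨1 / (14 * |(b:ℝ)|), by positivity, 0, ?_⟩
  intro r k hk
  have hk1 : (1:ℝ) ≤ (k:ℝ) := by exact_mod_cast hk
  have hkpos : (0:ℝ) < (k:ℝ) := lt_of_lt_of_le one_pos hk1
  set m : ℤ := 4 * k * b with hm
  set n : ℤ := 4 * k * a + r with hn
  have hkne : k ≠ 0 := by omega
  have hmne : m ≠ 0 := mul_ne_zero (mul_ne_zero (by norm_num) hkne) hb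
  have hveq : 4 * (k : ℝ) * ((a : ℝ) + (b : ℝ) * Real.sqrt 2) + (r : ℝ)
      = (n:ℝ) + (m:ℝ) * Real.sqrt 2 := by
    rw [hm, hn]; push_cast; ring
  rw [hveq]
  set s := Real.sqrt 2 with hs
  set v := (n:ℝ) + (m:ℝ) * s with hv
  set w := (n:ℝ) - (m:ℝ) * s with hw
  have hprod : v * w = (n:ℝ)^2 - 2 * (m:ℝ)^2 := by
    rw [hv, hw]; nlinarith [hs2]
  -- the integer n² - 2m² is nonzero
  have hint : n^2 - 2*m^2 ≠ 0 := by
    intro h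
    have h' : (n:ℝ)^2 = 2 * (m:ℝ)^2 := by
      have : n^2 = 2 * m^2 := by omega
      exact_mod_cast congrArg (Int.cast : ℤ → ℝ) this
    have hm0 : (m:ℝ) ≠ 0 := Int.cast_ne_zero.mpr hmne
    have hx : ((n:ℝ)/(m:ℝ))^2 = 2 := by
      rw [div_pow, h']; field_simp
    have hseq : Real.sqrt 2 = |(n:ℝ)/(m:ℝ)| := by
      rw [← hx, Real.sqrt_sq_eq_abs]
    exact irrational_sqrt_two ⟨|(n:ℚ)/(m:ℚ)|, by push_cast; exact hseq.symm⟩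
  have habs1 : (1:ℝ) ≤ |(n:ℝ)^2 - 2*(m:ℝ)^2| := by
    have h1 : (1:ℤ) ≤ |n^2 - 2*m^2| := Int.one_le_abs hint
    have : ((|n^2 - 2*m^2| : ℤ) : ℝ) = |(n:ℝ)^2 - 2*(m:ℝ)^2| := by
      rw [Int.cast_abs]; push_cast; ring_nf
    rw [← this]; exact_mod_cast h1
  have hvw : (1:ℝ) ≤ |v| * |w| := by
    rw [← abs_mul, hprod]; exact habs1
  have habsm : |(m:ℝ)| = 4 * (k:ℝ) * |(b:ℝ)| := by
    rw [hm]; push_cast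
    rw [abs_mul, abs_mul, abs_of_pos hkpos]
    norm_num
  by_cases h1 : 1 ≤ |v|
  · have h2 : 1 / (14 * |(b:ℝ)|) / (k:ℝ) ≤ 1 / 14 := by
      rw [div_div]
      apply div_le_div_of_nonneg_left (by norm_num) (by norm_num)
      nlinarith
    calc 1 / (14 * |(b:ℝ)|) / (k:ℝ) ≤ 1/14 := h2
      _ < 1 := by norm_num
      _ ≤ |v| := h1
  · push_neg at h1
    have hwb : |w| < 13 * (k:ℝ) * |(b:ℝ)| := by
      have : w = v - 2 * (m:ℝ) * s := by rw [hv, hw]; ring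
      rw [this]
      calc |v - 2 * (m:ℝ) * s| ≤ |v| + |2 * (m:ℝ) * s| := abs_sub _ _
        _ = |v| + 2 * |(m:ℝ)| * s := by
            rw [abs_mul, abs_mul, abs_of_pos (by norm_num : (0:ℝ) < 2),
              abs_of_nonneg hsnn]
        _ < 1 + 2 * (4 * (k:ℝ) * |(b:ℝ)|) * 1.5 := by
            rw [habsm]
            have hmnn : 0 ≤ 2 * (4 * (k:ℝ) * |(b:ℝ)|) := by positivity
            nlinarith
        _ = 1 + 12 * (k:ℝ) * |(b:ℝ)| := by ring
        _ ≤ 13 * (k:ℝ) * |(b:ℝ)| := by nlinarith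
    rw [div_div, div_lt_iff₀ (by positivity)]
    nlinarith [abs_nonneg v, abs_nonneg w,
      mul_nonneg (abs_nonneg v) (sub_pos.mpr hwb).le]
end

section
/- For integers a, b with b ≠ 0, integers k ≥ 1 and r: if |4k(a + b√2) + r| ≤ 1 then |4k(a + b√2) + r| · (1 + 8k|b|√2) ≥ 1. -/
open Real

/-- For integers a, b (b ≠ 0), k ≥ 1 and r: if `|4k(a+b√2)+r| ≤ 1` then
`|4k(a+b√2)+r| · (1 + 8k|b|√2) ≥ 1`. -/
theorem abs_mul_conjugate_bound (a b k r : ℤ) (hb : b ≠ 0) (hk : 1 ≤ k)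
    (h : |4 * (k : ℝ) * ((a : ℝ) + (b : ℝ) * Real.sqrt 2) + (r : ℝ)| ≤ 1) :
    1 ≤ |4 * (k : ℝ) * ((a : ℝ) + (b : ℝ) * Real.sqrt 2) + (r : ℝ)| *
      (1 + 8 * (k : ℝ) * |(b : ℝ)| * Real.sqrt 2) := by
  set A : ℤ := 4 * k * a + r with hA
  set B : ℤ := 4 * k * b with hB
  have s2 : Real.sqrt 2 * Real.sqrt 2 = 2 :=
    Real.mul_self_sqrt (by norm_num)
  set x : ℝ := 4 * (k : ℝ) * ((a : ℝ) + (b : ℝ) * Real.sqrt 2) + (r : ℝ) with hx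
  set y : ℝ := (A : ℝ) - (B : ℝ) * Real.sqrt 2 with hy
  have hBne : B ≠ 0 := by
    simp [hB]
    exact ⟨by omega, hb⟩
  have hxA : x = (A : ℝ) + (B : ℝ) * Real.sqrt 2 := by
    push_cast [hx, hA, hB]; ring
  have hxy : x * y = ((A^2 - 2 * B^2 : ℤ) : ℝ) := by
    rw [hxA, hy]; push_cast
    have : ((A:ℝ) + B * Real.sqrt 2) * ((A:ℝ) - B * Real.sqrt 2)
        = A^2 - B^2 * (Real.sqrt 2 * Real.sqrt 2) := by ring
    rw [this, s2]; ring
  have hne : A^2 - 2 * B^2 ≠ 0 := by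
    intro hzero
    have hAB : (A:ℝ)^2 = 2 * (B:ℝ)^2 := by
      have : ((A^2 - 2*B^2 : ℤ) : ℝ) = 0 := by exact_mod_cast hzero
      push_cast at this; linarith
    have hBR : (B:ℝ) ≠ 0 := Int.cast_ne_zero.mpr hBne
    have habs : |(A:ℝ)| = Real.sqrt 2 * |(B:ℝ)| := by
      rw [← Real.sqrt_sq_eq_abs, ← Real.sqrt_sq_eq_abs (B:ℝ), hAB,
        Real.sqrt_mul (by norm_num)]
    have : Real.sqrt 2 = |(A:ℝ)| / |(B:ℝ)| := by
      rw [habs]; field_simp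
    have hirr : Irrational (Real.sqrt 2) := irrational_sqrt_two
    apply hirr
    refine ⟨|(A:ℚ)| / |(B:ℚ)|, ?_⟩
    push_cast
    rw [this]
  have h1 : (1:ℝ) ≤ |x * y| := by
    rw [hxy]
    exact_mod_cast Int.one_le_abs hne
  rw [abs_mul] at h1
  have hyle : |y| ≤ 1 + 8 * (k : ℝ) * |(b : ℝ)| * Real.sqrt 2 := by
    have : y = x - 2 * (B:ℝ) * Real.sqrt 2 := by rw [hy, hxA]; ring
    rw [this]
    calc |x - 2 * (B:ℝ) * Real.sqrt 2| ≤ |x| + |2 * (B:ℝ) * Real.sqrt 2| :=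
          abs_sub _ _
      _ ≤ 1 + 8 * (k : ℝ) * |(b : ℝ)| * Real.sqrt 2 := by
          gcongr
          rw [abs_mul, abs_mul]
          rw [abs_of_nonneg (Real.sqrt_nonneg 2)]
          have hk' : (1:ℝ) ≤ (k:ℝ) := by exact_mod_cast hk
          have : |(B:ℝ)| = 4 * (k:ℝ) * |(b:ℝ)| := by
            push_cast [hB, abs_mul]
            rw [abs_of_nonneg (by linarith : (0:ℝ) ≤ (k:ℝ))]
            norm_num
          rw [this, abs_two]
          ring_nf
          linarith
  have hfin := mul_le_mul_of_nonneg_left hyle (abs_nonneg x)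
  linarith
end

section
/- Let s₀ be real and let Z be a set of complex numbers, closed under conjugation, with no accumulation point, none equal to any point of (s₀ − ε, s₀ + ε) ⊂ ℝ, and such that every horizontal strip {z : a ≤ Im z ≤ b} contains only finitely many elements of Z. Then there exists s' ∈ (s₀ − ε, s₀ + ε) and ρ₀ ∈ Z with Im ρ₀ ≥ 0 such that |s' − ρ₀| < |s' − ρ| for every ρ ∈ Z with ρ ∉ {ρ₀, ρ̄₀}. -/
open Complex Set Filter

/-! For all but countably many real `s`, no two points of `Z` other than a conjugate pair are
equidistant from `s`: a real point equidistant from `ρ₁` and `ρ₂` satisfies an affine equation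
in `s` which is nondegenerate unless `ρ₂ ∈ {ρ₁, conj ρ₁}`, and `Z` is countable. Choosing such an
`s'` in the interval, a nearest point of `Z` to `s'` exists since `Z` meets every disc in a finite
set, and it is unique up to conjugation. -/

lemma subsingleton_setOf_norm_ofReal_sub_eq {ρ₁ ρ₂ : ℂ} (h₁ : ρ₁ ≠ ρ₂)
    (h₂ : ρ₁ ≠ starRingEnd ℂ ρ₂) :
    {s : ℝ | ‖(s : ℂ) - ρ₁‖ = ‖(s : ℂ) - ρ₂‖}.Subsingleton := by
  have normSq_eq {s : ℝ} (hs : ‖(s : ℂ) - ρ₁‖ = ‖(s : ℂ) - ρ₂‖) :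
      (s - ρ₁.re) ^ 2 + ρ₁.im ^ 2 = (s - ρ₂.re) ^ 2 + ρ₂.im ^ 2 := by
    have := congrArg (· ^ 2) hs
    simp only [Complex.sq_norm, normSq_apply, sub_re, sub_im, ofReal_re, ofReal_im] at this
    linear_combination this
  intro s hs t ht
  by_contra hst
  have hs' := normSq_eq hs
  have ht' := normSq_eq ht
  have hre : ρ₁.re = ρ₂.re := by
    have : (t - s) * (ρ₁.re - ρ₂.re) = 0 := by linear_combination (hs' - ht') / 2
    exact sub_eq_zero.mp ((mul_eq_zero.mp this).resolve_left (sub_ne_zero.mpr (Ne.symm hst)))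
  have him : ρ₁.im ^ 2 = ρ₂.im ^ 2 := by rw [hre] at hs'; linarith
  rcases sq_eq_sq_iff_eq_or_eq_neg.mp him with him | him
  · exact h₁ (Complex.ext hre him)
  · exact h₂ (Complex.ext (by simpa using hre) (by simpa using him))

lemma countable_setOf_exists_norm_ofReal_sub_eq {Z : Set ℂ} (hZ : Z.Countable) :
    {s : ℝ | ∃ ρ₁ ∈ Z, ∃ ρ₂ ∈ Z, ρ₁ ≠ ρ₂ ∧ ρ₁ ≠ starRingEnd ℂ ρ₂ ∧
      ‖(s : ℂ) - ρ₁‖ = ‖(s : ℂ) - ρ₂‖}.Countable := by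
  let equidistant (p : ℂ × ℂ) : Set ℝ :=
    {s | p.1 ≠ p.2 ∧ p.1 ≠ starRingEnd ℂ p.2 ∧ ‖(s : ℂ) - p.1‖ = ‖(s : ℂ) - p.2‖}
  refine ((hZ.prod hZ).biUnion fun p _ => Subsingleton.countable (s := equidistant p) ?_).mono ?_
  · exact fun s hs t ht => subsingleton_setOf_norm_ofReal_sub_eq hs.1 hs.2.1 hs.2.2 ht.2.2
  · rintro s ⟨ρ₁, h₁, ρ₂, h₂, hs⟩
    exact mem_biUnion (x := (ρ₁, ρ₂)) ⟨h₁, h₂⟩ hs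

section Metric

variable {α : Type*} [PseudoMetricSpace α] {Z : Set α}

lemma countable_of_finite_inter_closedBall (w : α)
    (hZ : ∀ R, (Z ∩ Metric.closedBall w R).Finite) : Z.Countable := by
  refine (countable_iUnion fun n : ℕ => (hZ n).countable).mono fun z hz => ?_
  obtain ⟨n, hn⟩ := exists_nat_ge (dist z w)
  exact mem_iUnion.mpr ⟨n, hz, hn⟩

lemma exists_forall_dist_le_of_finite_inter_closedBall (hne : Z.Nonempty) (w : α)
    (hZ : ∀ R, (Z ∩ Metric.closedBall w R).Finite) :
    ∃ ρ ∈ Z, ∀ z ∈ Z, dist w ρ ≤ dist w z := by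
  obtain ⟨z₀, hz₀⟩ := hne
  obtain ⟨ρ, ⟨hρ, -⟩, hmin⟩ := exists_min_image _ (dist w) (hZ (dist w z₀))
    ⟨z₀, hz₀, by rw [Metric.mem_closedBall, dist_comm]⟩
  refine ⟨ρ, hρ, fun z hz => ?_⟩
  rcases le_total (dist w z) (dist w z₀) with h | h
  · exact hmin z ⟨hz, by rwa [Metric.mem_closedBall, dist_comm]⟩
  · exact (hmin z₀ ⟨hz₀, by rw [Metric.mem_closedBall, dist_comm]⟩).trans h

end Metric

lemma finite_inter_closedBall_of_finite_strips {Z : Set ℂ}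
    (hstrip : ∀ a b : ℝ, {z ∈ Z | a ≤ z.im ∧ z.im ≤ b}.Finite) (w : ℂ) (R : ℝ) :
    (Z ∩ Metric.closedBall w R).Finite := by
  refine (hstrip (w.im - R) (w.im + R)).subset fun z ⟨hz, hzR⟩ => ⟨hz, ?_⟩
  have := (Complex.abs_im_le_norm (z - w)).trans (mem_closedBall_iff_norm.mp hzR)
  rw [sub_im] at this
  constructor <;> linarith [abs_le.mp this]

lemma norm_ofReal_sub_conj (s : ℝ) (ρ : ℂ) : ‖(s : ℂ) - starRingEnd ℂ ρ‖ = ‖(s : ℂ) - ρ‖ := by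
  rw [← Complex.norm_conj, map_sub, conj_ofReal, conj_conj]

lemma exists_im_nonneg_forall_norm_le {Z : Set ℂ} (hconj : ∀ z ∈ Z, starRingEnd ℂ z ∈ Z)
    {s : ℝ} {ρ : ℂ} (hρ : ρ ∈ Z) (hmin : ∀ z ∈ Z, ‖(s : ℂ) - ρ‖ ≤ ‖(s : ℂ) - z‖) :
    ∃ ρ₀ ∈ Z, 0 ≤ ρ₀.im ∧ ∀ z ∈ Z, ‖(s : ℂ) - ρ₀‖ ≤ ‖(s : ℂ) - z‖ := by
  rcases le_total 0 ρ.im with h | h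
  · exact ⟨ρ, hρ, h, hmin⟩
  · exact ⟨starRingEnd ℂ ρ, hconj ρ hρ, by simpa using h,
      by simpa only [norm_ofReal_sub_conj] using hmin⟩

theorem exists_unique_closest_zero_general (s₀ ε : ℝ) (hε : 0 < ε) (Z : Set ℂ)
    (hne : Z.Nonempty)
    (hconj : ∀ z ∈ Z, (starRingEnd ℂ) z ∈ Z)
    (hstrip : ∀ a b : ℝ, {z ∈ Z | a ≤ z.im ∧ z.im ≤ b}.Finite) :
    ∃ s' ∈ Ioo (s₀ - ε) (s₀ + ε), ∃ ρ₀ ∈ Z, 0 ≤ ρ₀.im ∧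
      ∀ ρ ∈ Z, ρ ≠ ρ₀ → ρ ≠ (starRingEnd ℂ) ρ₀ →
        ‖(s' : ℂ) - ρ₀‖ < ‖(s' : ℂ) - ρ‖ := by
  have hfin := finite_inter_closedBall_of_finite_strips hstrip
  have hties := countable_setOf_exists_norm_ofReal_sub_eq
    (countable_of_finite_inter_closedBall 0 (hfin 0))
  obtain ⟨s', hs', hs'_tie⟩ := (hties.dense_compl ℝ).inter_open_nonempty _ isOpen_Ioo
    (nonempty_Ioo.mpr (by linarith : s₀ - ε < s₀ + ε))
  obtain ⟨ρ, hρ, hmin⟩ := exists_forall_dist_le_of_finite_inter_closedBall hne (s' : ℂ) (hfin _)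
  simp only [dist_eq_norm] at hmin
  obtain ⟨ρ₀, hρ₀, him, hmin₀⟩ := exists_im_nonneg_forall_norm_le hconj hρ hmin
  refine ⟨s', hs', ρ₀, hρ₀, him, fun z hz h₁ h₂ => (hmin₀ z hz).lt_of_ne fun heq => ?_⟩
  exact hs'_tie ⟨ρ₀, hρ₀, z, hz, h₁.symm, fun h => h₂ (by rw [h, conj_conj]), heq⟩

/-- If Z is a nonempty set of complex numbers, closed under conjugation, with no
accumulation point, only finitely many members in each horizontal strip, and disjoint
from the real interval (s₀−ε, s₀+ε), then some s' in the interval has a unique closest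
element ρ₀ of Z in the closed upper half-plane: |s'−ρ₀| < |s'−ρ| for all
ρ ∈ Z \ {ρ₀, ρ̄₀}. -/
theorem exists_unique_closest_zero (s₀ ε : ℝ) (hε : 0 < ε) (Z : Set ℂ)
    (hne : Z.Nonempty)
    (hconj : ∀ z ∈ Z, (starRingEnd ℂ) z ∈ Z)
    (hacc : ∀ w : ℂ, ¬ AccPt w (Filter.principal Z))
    (hstrip : ∀ a b : ℝ, {z ∈ Z | a ≤ z.im ∧ z.im ≤ b}.Finite)
    (hdisj : ∀ x ∈ Ioo (s₀ - ε) (s₀ + ε), (x : ℂ) ∉ Z) :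
    ∃ s' ∈ Ioo (s₀ - ε) (s₀ + ε), ∃ ρ₀ ∈ Z, 0 ≤ ρ₀.im ∧
      ∀ ρ ∈ Z, ρ ≠ ρ₀ → ρ ≠ (starRingEnd ℂ) ρ₀ →
        ‖(s' : ℂ) - ρ₀‖ < ‖(s' : ℂ) - ρ‖ :=
  exists_unique_closest_zero_general s₀ ε hε Z hne hconj hstrip
end
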